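/- arXiv:math/0302121 — 3 statements merged into one kernel-verified Lean document; each statement's English description precedes it below -/
import Mathlib

section
/- Let A be a commutative ring, g ≥ 1 an integer, μ ∈ A, and let G = Σ_{i=0}^{2g−2} G_i(u) T^i ∈ A[u][T] be a polynomial of degree at most 2g−2 in T satisfying: (i) G_{2g−2−i}(u) = u^{g−1−i} G_i(u) for all 0 ≤ i ≤ g−1; (ii) G(T,1) = μ·(1 + T + ⋯ + T^{2g−2}) in A[T]; (iii) G_0(u) = (μ−1) + u; (iv) deg_u G_i ≤ ⌊i/2⌋ + 1 for all 0 ≤ i ≤ 2g−2. Define Q(T,u) := μ·((1−T)u^g T^{2g−1} − (1−uT)) + (1−uT)(1−T)·G(T,u) ∈ A[T,u]. Then Q is divisible by u−1 in A[T,u], and the polynomial P := Q/(u−1), written P = Σ_{i=0}^{2g} P_i(u) T^i, satisfies: P has degree at most 2g in T; P_0(u) = 1; P_{2g}(u) = u^g; deg_u P_i ≤ ⌊i/2⌋ + 1 for all i; P_{2g−i}(u) = u^{g−i} P_i(u) for all 0 ≤ i ≤ g; and P(1,u) = μ (a constant polynomial in u). -/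
/-!
Setting `u = 1` in `Q` gives `0` by (ii), so `u - 1` divides `Q` coefficientwise. The twisted
palindromy `(uT)^{2w} H(1/(uT), u) = u^w H(T, u)` is multiplicative in `H`, with weights adding:
`(1 - uT)(1 - T)` has weight `1`, `G` has weight `g - 1` by (i), and the `μ`-term has weight `g`,
so `Q`, hence `P`, has weight `g`. In the same way the bound `deg_u H_i ≤ ⌊i/2⌋ + c` is additive in
`c` under products, so `deg_u Q_i ≤ ⌊i/2⌋ + 2` by (iv), and dividing by `u - 1` removes one. The
remaining coefficients come from `Q_0 = u - 1` (by (iii)) and `Q(1, u) = μ (u - 1)`.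
-/

open Polynomial

namespace Polynomial

variable {A : Type*} [CommRing A]

theorem dvd_iff_map_evalRingHom_eq_zero (a : A) (p : A[X][X]) :
    C (X - C a) ∣ p ↔ p.map (evalRingHom a) = 0 := by
  rw [← Ideal.mem_span_singleton, ← Set.image_singleton, ← Ideal.map_span, ← ker_evalRingHom,
    ← ker_mapRingHom, RingHom.mem_ker, coe_mapRingHom]

/-- `(uT)^{2w} H(1/(uT), u) = u^w H(T, u)`, the outer variable being `T` and the inner one `u`. -/
def FunctionalEquation (w : ℕ) (H : A[X][X]) : Prop :=
  H.natDegree ≤ 2 * w ∧ (reflect (2 * w) H).comp (C X * X) = C (X ^ w) * H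

namespace FunctionalEquation

variable {a b w : ℕ} {H K : A[X][X]}

theorem add (hH : FunctionalEquation w H) (hK : FunctionalEquation w K) :
    FunctionalEquation w (H + K) :=
  ⟨natDegree_add_le_of_degree_le hH.1 hK.1, by rw [reflect_add, add_comp, hH.2, hK.2, mul_add]⟩

theorem C_mul (c : A[X]) (hH : FunctionalEquation w H) : FunctionalEquation w (C c * H) :=
  ⟨(natDegree_C_mul_le c H).trans hH.1, by rw [reflect_C_mul, C_mul_comp, hH.2, mul_left_comm]⟩

theorem mul (hH : FunctionalEquation a H) (hK : FunctionalEquation b K) :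
    FunctionalEquation (a + b) (H * K) := by
  refine ⟨natDegree_mul_le_of_le hH.1 hK.1 |>.trans (by omega), ?_⟩
  rw [mul_add, reflect_mul _ _ hH.1 hK.1, mul_comp, hH.2, hK.2, pow_add, Polynomial.C_mul]
  ring

theorem of_C_mul {m : A[X]} (hm : IsSMulRegular A[X] m) (h : FunctionalEquation w (C m * H)) :
    FunctionalEquation w H := by
  refine ⟨?_, hm.polynomial ?_⟩
  · rw [← natDegree_smul_of_smul_regular H hm, smul_eq_C_mul]
    exact h.1
  · simp only [smul_eq_C_mul]
    rw [← C_mul_comp, ← reflect_C_mul, h.2, mul_left_comm]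

end FunctionalEquation

theorem functionalEquation_iff {w : ℕ} {H : A[X][X]} :
    FunctionalEquation w H ↔
      H.natDegree ≤ 2 * w ∧ ∀ i ≤ w, H.coeff (2 * w - i) = X ^ (w - i) * H.coeff i := by
  refine and_congr_right fun hdeg => ?_
  rw [Polynomial.ext_iff]
  simp only [comp_C_mul_X_coeff, coeff_reflect, coeff_C_mul]
  constructor
  · intro h i hi
    have := h i
    rw [revAt_le (by omega)] at this
    refine (isRegular_X_pow i).left ?_
    simp only
    rw [mul_comm, this, ← mul_assoc, ← pow_add, Nat.add_sub_cancel' hi]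
  · intro h n
    rcases le_or_gt n w with hn | hn
    · rw [revAt_le (by omega), h n hn, mul_right_comm, ← pow_add, Nat.sub_add_cancel hn]
    rcases le_or_gt n (2 * w) with hn' | hn'
    · have := h (2 * w - n) (by omega)
      rw [Nat.sub_sub_self hn'] at this
      rw [revAt_le hn', this, ← mul_assoc, ← pow_add, show w + (w - (2 * w - n)) = n by omega,
        mul_comm]
    · rw [revAt_eq_self_of_lt hn', coeff_eq_zero_of_natDegree_lt (by omega), zero_mul, mul_zero]

theorem functionalEquation_one_sub_C_X_mul_X_mul_one_sub_X :
    FunctionalEquation 1 ((1 - C X * X) * (1 - X) : A[X][X]) := by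
  have e : ((1 - C X * X) * (1 - X) : A[X][X]) =
      C X * X ^ 2 - C (1 + X) * X ^ 1 + C 1 * X ^ 0 := by
    simp only [map_add, map_one]; ring
  refine ⟨by rw [e]; compute_degree!, ?_⟩
  rw [e]
  simp only [reflect_add, reflect_sub, reflect_C_mul_X_pow]
  rw [revAt_le (by omega), revAt_le (by omega), revAt_le (by omega)]
  simp only [add_comp, sub_comp, mul_comp, C_comp, X_pow_comp]
  simp only [map_add, map_one, map_pow]
  ring

theorem functionalEquation_one_sub_X_mul_C_X_pow_mul_X_pow_sub (g : ℕ) (hg : 1 ≤ g) :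
    FunctionalEquation g ((1 - X) * C (X ^ g) * X ^ (2 * g - 1) - (1 - C X * X) : A[X][X]) := by
  obtain ⟨k, rfl⟩ : ∃ k, g = k + 1 := ⟨g - 1, by omega⟩
  have e : ((1 - X) * C (X ^ (k + 1)) * X ^ (2 * (k + 1) - 1) - (1 - C X * X) : A[X][X]) =
      C (X ^ (k + 1)) * X ^ (2 * k + 1) - C (X ^ (k + 1)) * X ^ (2 * k + 2) - C 1 * X ^ 0 +
        C X * X ^ 1 := by
    rw [show 2 * (k + 1) - 1 = 2 * k + 1 by omega]; simp only [map_one]; ring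
  refine ⟨by rw [e]; compute_degree!, ?_⟩
  rw [e]
  simp only [reflect_add, reflect_sub, reflect_C_mul_X_pow]
  rw [revAt_le (by omega), revAt_le (by omega), revAt_le (by omega), revAt_le (by omega),
    show 2 * (k + 1) - (2 * k + 1) = 1 by omega, show 2 * (k + 1) - (2 * k + 2) = 0 by omega,
    show 2 * (k + 1) - 1 = 2 * k + 1 by omega, Nat.sub_zero]
  simp only [add_comp, sub_comp, mul_comp, C_comp, X_pow_comp]
  simp only [map_one, map_pow]
  ring

def IsCliffordBounded (c : ℕ) (H : A[X][X]) : Prop :=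
  ∀ i, (H.coeff i).natDegree ≤ i / 2 + c

namespace IsCliffordBounded

variable {c d : ℕ} {H K : A[X][X]}

theorem mono (hH : IsCliffordBounded c H) (hcd : c ≤ d) : IsCliffordBounded d H :=
  fun i => (hH i).trans (by omega)

theorem add (hH : IsCliffordBounded c H) (hK : IsCliffordBounded c K) :
    IsCliffordBounded c (H + K) := fun i => by
  rw [coeff_add]; exact natDegree_add_le_of_degree_le (hH i) (hK i)

theorem sub (hH : IsCliffordBounded c H) (hK : IsCliffordBounded c K) :
    IsCliffordBounded c (H - K) := fun i => by
  rw [coeff_sub]; exact (natDegree_sub_le _ _).trans (max_le (hH i) (hK i))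

theorem mul (hH : IsCliffordBounded c H) (hK : IsCliffordBounded d K) :
    IsCliffordBounded (c + d) (H * K) := fun i => by
  rw [coeff_mul]
  refine natDegree_sum_le_of_forall_le _ _ fun x hx =>
    (natDegree_mul_le_of_le (hH _) (hK _)).trans ?_
  rw [Finset.HasAntidiagonal.mem_antidiagonal] at hx
  omega

theorem of_C_X_sub_C_mul {a : A} (h : IsCliffordBounded (c + 1) (C (X - C a) * H)) :
    IsCliffordBounded c H := fun i => by
  nontriviality A
  rcases eq_or_ne (H.coeff i) 0 with h0 | h0
  · simp [h0]
  have := h i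
  rw [coeff_C_mul, (monic_X_sub_C a).natDegree_mul' h0, natDegree_X_sub_C] at this
  omega

end IsCliffordBounded

theorem isCliffordBounded_C_mul_X_pow {c n : ℕ} {p : A[X]} (hp : p.natDegree ≤ n / 2 + c) :
    IsCliffordBounded c (C p * X ^ n) := fun i => by
  rw [coeff_C_mul_X_pow]
  split_ifs with h
  · exact h ▸ hp
  · simp

noncomputable def zetaQ (g : ℕ) (μ : A) (G : A[X][X]) : A[X][X] :=
  C (C μ) * ((1 - X) * C (X ^ g) * X ^ (2 * g - 1) - (1 - C X * X)) + (1 - C X * X) * (1 - X) * G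

variable {g : ℕ} {μ : A} {G : A[X][X]}

theorem zetaQ_map_evalRingHom_one
    (hG : G.map (evalRingHom 1) = C μ * ∑ i ∈ Finset.range (2 * g - 1), X ^ i) :
    (zetaQ g μ G).map (evalRingHom 1) = 0 := by
  have hgeom := geom_sum_mul (X : A[X]) (2 * g - 1)
  simp only [zetaQ, Polynomial.map_add, Polynomial.map_mul, Polynomial.map_sub,
    Polynomial.map_one, Polynomial.map_pow, map_C, Polynomial.map_X, hG, coe_evalRingHom,
    eval_pow, eval_X, eval_C, one_pow, map_one]
  linear_combination (C μ * (X - 1 : A[X])) * hgeom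

theorem coeff_zero_zetaQ (hg : 1 ≤ g) : (zetaQ g μ G).coeff 0 = G.coeff 0 - C μ := by
  simp [zetaQ, coeff_zero_eq_eval_zero, zero_pow (show 2 * g - 1 ≠ 0 by omega), sub_eq_neg_add]

theorem eval_one_zetaQ : (zetaQ g μ G).eval 1 = C μ * (X - 1) := by
  simp [zetaQ]

theorem functionalEquation_zetaQ (hg : 1 ≤ g) (hG : FunctionalEquation (g - 1) G) :
    FunctionalEquation g (zetaQ g μ G) := by
  have hEG := functionalEquation_one_sub_C_X_mul_X_mul_one_sub_X.mul hG
  rw [Nat.add_sub_cancel' hg] at hEG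
  exact ((functionalEquation_one_sub_X_mul_C_X_pow_mul_X_pow_sub g hg).C_mul _).add hEG

theorem isCliffordBounded_zetaQ (hG : IsCliffordBounded 1 G) :
    IsCliffordBounded 2 (zetaQ g μ G) := by
  have hμ : IsCliffordBounded 0 (C (C μ) : A[X][X]) := fun i => by
    rw [coeff_C]; split_ifs <;> simp
  have hT : IsCliffordBounded 0 (1 - X : A[X][X]) := fun i => by
    rw [coeff_sub, coeff_one, coeff_X]; split_ifs <;> simp
  have huT : IsCliffordBounded 1 (1 - C X * X : A[X][X]) := fun i => by
    rw [coeff_sub, coeff_one, coeff_C_mul_X]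
    refine le_trans (b := 1) ?_ (by omega)
    split_ifs <;> compute_degree!
  have hpow : IsCliffordBounded 1 (C (X ^ g) * X ^ (2 * g - 1) : A[X][X]) :=
    isCliffordBounded_C_mul_X_pow (natDegree_X_pow_le g |>.trans (by omega))
  rw [zetaQ, mul_assoc (1 - X)]
  exact ((hμ.mul ((hT.mul hpow).sub huT)).mono (by omega)).add ((huT.mul hT).mul hG)

end Polynomial

theorem numerator_of_two_variable_zeta
    {A : Type*} [CommRing A] (g : ℕ) (hg : 1 ≤ g) (μ : A)
    (G : Polynomial (Polynomial A))
    (hGdeg : G.natDegree ≤ 2 * g - 2)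
    (hG_fe : ∀ i : ℕ, i ≤ g - 1 →
      G.coeff (2 * g - 2 - i) = Polynomial.X ^ (g - 1 - i) * G.coeff i)
    (hG_at_one : G.map (Polynomial.evalRingHom (1 : A)) =
      Polynomial.C μ * ∑ i ∈ Finset.range (2 * g - 1), Polynomial.X ^ i)
    (hG_zero : G.coeff 0 = Polynomial.C (μ - 1) + Polynomial.X)
    (hG_clifford : ∀ i : ℕ, i ≤ 2 * g - 2 → (G.coeff i).natDegree ≤ i / 2 + 1) :
    ∃ P : Polynomial (Polynomial A),
      -- `Q = (u − 1) · P`, i.e. `u − 1` divides `Q`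
      (Polynomial.C (Polynomial.C μ) *
          ((1 - Polynomial.X) * Polynomial.C (Polynomial.X ^ g) * Polynomial.X ^ (2 * g - 1) -
            (1 - Polynomial.C Polynomial.X * Polynomial.X)) +
        (1 - Polynomial.C Polynomial.X * Polynomial.X) * (1 - Polynomial.X) * G) =
        Polynomial.C (Polynomial.X - 1) * P ∧
      -- `P` has degree at most `2g` in `T`
      P.natDegree ≤ 2 * g ∧
      -- `P_0(u) = 1`
      P.coeff 0 = 1 ∧
      -- `P_{2g}(u) = u^g`
      P.coeff (2 * g) = Polynomial.X ^ g ∧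
      -- `deg_u P_i ≤ ⌊i/2⌋ + 1` for all `i`
      (∀ i : ℕ, (P.coeff i).natDegree ≤ i / 2 + 1) ∧
      -- functional equation `P_{2g−i}(u) = u^{g−i} P_i(u)` for `0 ≤ i ≤ g`
      (∀ i : ℕ, i ≤ g → P.coeff (2 * g - i) = Polynomial.X ^ (g - i) * P.coeff i) ∧
      -- `P(1,u) = μ`, a constant polynomial in `u`
      P.eval (1 : Polynomial A) = Polynomial.C μ := by
  have hreg : IsRegular (X - C 1 : A[X]) := (monic_X_sub_C 1).isRegular
  obtain ⟨P, hQP⟩ := (dvd_iff_map_evalRingHom_eq_zero 1 (zetaQ g μ G)).2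
    (zetaQ_map_evalRingHom_one hG_at_one)
  have hGfe : FunctionalEquation (g - 1) G := functionalEquation_iff.2
    ⟨by omega, fun i hi => by rw [show 2 * (g - 1) - i = 2 * g - 2 - i by omega]; exact hG_fe i hi⟩
  have hGcliff : IsCliffordBounded 1 G := fun i => by
    rcases le_or_gt i (2 * g - 2) with hi | hi
    · exact hG_clifford i hi
    · simp [coeff_eq_zero_of_natDegree_lt (hGdeg.trans_lt hi)]
  obtain ⟨hPdeg, hPfe⟩ := functionalEquation_iff.1
    ((hQP ▸ functionalEquation_zetaQ hg hGfe).of_C_mul hreg.left.isSMulRegular)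
  have hP0 : P.coeff 0 = 1 := hreg.left <| show (X - C 1) * P.coeff 0 = (X - C 1) * 1 by
    rw [← coeff_C_mul, ← hQP, coeff_zero_zetaQ hg, hG_zero, map_sub, map_one]; ring
  refine ⟨P, by rwa [zetaQ, map_one] at hQP, hPdeg, hP0,
    by simpa [hP0] using hPfe 0 (Nat.zero_le _),
    (hQP ▸ isCliffordBounded_zetaQ hGcliff).of_C_X_sub_C_mul, hPfe, hreg.left ?_⟩
  simpa [eval_one_zetaQ, mul_comm] using congrArg (eval 1) hQP.symm
end

section
/- Let K be a field, g ≥ 1 an integer, and let F ∈ K[T,u] be a polynomial which, viewed as a polynomial in u with coefficients in K[T], has degree g and leading coefficient c·(1−T) for some nonzero c ∈ K, and such that F(1,u) (the result of substituting T = 1) is a nonzero constant polynomial in K[u]. Then F is irreducible in K[T,u]; moreover, for every field extension L of K, the image of F in L[T,u] is irreducible, i.e. F is absolutely irreducible. -/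
/- STATEMENT 4:
Let `K` be a field, `g ≥ 1`, and let `F ∈ K[T,u]` be a polynomial which, viewed as a
polynomial in `u` with coefficients in `K[T]` (here modelled as `Polynomial (Polynomial K)`
with *inner* variable `T` and *outer* variable `u`), has degree `g` and leading coefficient
`c·(1−T)` for some nonzero `c ∈ K`, and such that `F(1,u)` (substituting `T = 1` into the
coefficients) is a nonzero constant polynomial in `K[u]`.  Then `F` is irreducible in
`K[T,u]`, and moreover for every field extension `L/K` the image of `F` in `L[T,u]` is
irreducible, i.e. `F` is absolutely irreducible. -/

open Polynomial

private lemma natDegree_lead_aux {L : Type*} [Field L] (c : L) (hc : c ≠ 0) :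
    (Polynomial.C c * (1 - Polynomial.X)).natDegree = 1 := by
  rw [natDegree_C_mul hc]
  have : (1 - X : Polynomial L) = -(X - C 1) := by ring_nf; simp [sub_eq_add_neg, add_comm]
  rw [this, natDegree_neg, natDegree_X_sub_C]

private lemma eval_one_lead_aux {L : Type*} [Field L] (c : L) :
    (Polynomial.C c * (1 - Polynomial.X)).eval 1 = 0 := by simp

/-- Key step: if `F = G * H` and the leading coefficient of `G` (a polynomial in `T`)
does not vanish at `T = 1`, then `G` is a unit. -/
private lemma unit_of_factor {L : Type*} [Field L]
    (F G H : Polynomial (Polynomial L)) (c : L) (hc : c ≠ 0)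
    (hlead : F.leadingCoeff = C c * (1 - X))
    (a : L) (ha : a ≠ 0)
    (hval : F.map (evalRingHom (1 : L)) = C a)
    (hF : F = G * H) (hG : G ≠ 0) (hH : H ≠ 0)
    (hGl : G.leadingCoeff.eval 1 ≠ 0) : IsUnit G := by
  -- images under evaluation at T = 1
  have hmul : G.map (evalRingHom (1 : L)) * H.map (evalRingHom (1 : L)) = C a := by
    rw [← Polynomial.map_mul, ← hF, hval]
  have hG1 : G.map (evalRingHom (1 : L)) ≠ 0 := by
    intro h
    rw [h, zero_mul] at hmul
    exact ha (by simpa using hmul.symm)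
  have hH1 : H.map (evalRingHom (1 : L)) ≠ 0 := by
    intro h
    rw [h, mul_zero] at hmul
    exact ha (by simpa using hmul.symm)
  -- degree in u of G is 0
  have hdegG1 : (G.map (evalRingHom (1 : L))).natDegree = G.natDegree :=
    natDegree_map_of_leadingCoeff_ne_zero _ hGl
  have hdegsum : (G.map (evalRingHom (1 : L))).natDegree
      + (H.map (evalRingHom (1 : L))).natDegree = 0 := by
    rw [← natDegree_mul hG1 hH1, hmul, natDegree_C]
  have hGdeg0 : G.natDegree = 0 := by omega
  -- so G = C p with p.eval 1 ≠ 0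
  obtain ⟨p, hp⟩ : ∃ p, G = C p := ⟨G.coeff 0, (eq_C_of_natDegree_eq_zero hGdeg0)⟩
  have hpne : p ≠ 0 := by rintro rfl; simp at hp; exact hG hp
  have hplead : G.leadingCoeff = p := by rw [hp]; simp
  have hpeval : p.eval 1 ≠ 0 := hplead ▸ hGl
  -- leading coefficient relation: p * H.leadingCoeff = C c * (1 - X)
  have hleads : p * H.leadingCoeff = C c * (1 - X) := by
    have := congrArg Polynomial.leadingCoeff hF
    rw [leadingCoeff_mul, hplead, hlead] at this
    exact this.symm
  have hHlne : H.leadingCoeff ≠ 0 := leadingCoeff_ne_zero.mpr hH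
  -- degrees in T add up to 1
  have hdT : p.natDegree + H.leadingCoeff.natDegree = 1 := by
    rw [← natDegree_mul hpne hHlne, hleads, natDegree_lead_aux c hc]
  -- evaluating the relation at T = 1 gives p.eval 1 * (H.lead).eval 1 = 0
  have hev : p.eval 1 * H.leadingCoeff.eval 1 = 0 := by
    have := congrArg (Polynomial.eval (1 : L)) hleads
    rwa [eval_mul, eval_one_lead_aux] at this
  have hHl0 : H.leadingCoeff.eval 1 = 0 := by
    rcases mul_eq_zero.mp hev with h | h
    · exact absurd h hpeval
    · exact h
  -- H.leadingCoeff cannot be a nonzero constant, so its degree is 1 and p has degree 0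
  have hpdeg : p.natDegree = 0 := by
    rcases Nat.eq_zero_or_pos H.leadingCoeff.natDegree with h0 | hpos
    · exfalso
      have := eq_C_of_natDegree_eq_zero h0
      rw [this] at hHl0
      simp at hHl0
      rw [this, hHl0] at hHlne
      simp at hHlne
    · omega
  -- hence p is a unit in L[T], so G = C p is a unit
  have : IsUnit p := by
    have := eq_C_of_natDegree_eq_zero hpdeg
    rw [this]
    refine Polynomial.isUnit_C.mpr (isUnit_iff_ne_zero.mpr ?_)
    intro h
    rw [h] at this
    simp at this
    exact hpne this
  rw [hp]
  exact Polynomial.isUnit_C.mpr this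

/-- The main irreducibility lemma over an arbitrary field. -/
private lemma key_irred {L : Type*} [Field L] (g : ℕ) (hg : 1 ≤ g)
    (F : Polynomial (Polynomial L)) (c : L) (hc : c ≠ 0)
    (hdeg : F.natDegree = g)
    (hlead : F.leadingCoeff = C c * (1 - X))
    (a : L) (ha : a ≠ 0)
    (hval : F.map (evalRingHom (1 : L)) = C a) : Irreducible F := by
  have hF0 : F ≠ 0 := by
    intro h; rw [h, natDegree_zero] at hdeg; omega
  constructor
  · exact Polynomial.not_isUnit_of_natDegree_pos F (by omega)
  · intro G H hF
    have hG : G ≠ 0 := by rintro rfl; rw [zero_mul] at hF; exact hF0 hF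
    have hH : H ≠ 0 := by rintro rfl; rw [mul_zero] at hF; exact hF0 hF
    have hleads : G.leadingCoeff * H.leadingCoeff = C c * (1 - X) := by
      have := congrArg Polynomial.leadingCoeff hF
      rw [leadingCoeff_mul, hlead] at this
      exact this.symm
    have hGlne : G.leadingCoeff ≠ 0 := leadingCoeff_ne_zero.mpr hG
    have hHlne : H.leadingCoeff ≠ 0 := leadingCoeff_ne_zero.mpr hH
    have hdT : G.leadingCoeff.natDegree + H.leadingCoeff.natDegree = 1 := by
      rw [← natDegree_mul hGlne hHlne, hleads, natDegree_lead_aux c hc]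
    have evalne : ∀ q : Polynomial L, q ≠ 0 → q.natDegree = 0 → q.eval 1 ≠ 0 := by
      intro q hq h0 hev
      have hqc := eq_C_of_natDegree_eq_zero h0
      rw [hqc] at hev
      simp at hev
      rw [hqc, hev] at hq
      simp at hq
    rcases Nat.eq_zero_or_pos G.leadingCoeff.natDegree with h0 | hpos
    · exact Or.inl (unit_of_factor F G H c hc hlead a ha hval hF hG hH
        (evalne _ hGlne h0))
    · have hH0 : H.leadingCoeff.natDegree = 0 := by omega
      exact Or.inr (unit_of_factor F H G c hc hlead a ha hval (by rw [hF, mul_comm]) hH hG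
        (evalne _ hHlne hH0))

theorem absolutely_irreducible_of_leading_coeff
    {K : Type*} [Field K] (g : ℕ) (hg : 1 ≤ g)
    (F : Polynomial (Polynomial K)) (c : K) (hc : c ≠ 0)
    (hdeg : F.natDegree = g)
    (hlead : F.leadingCoeff = Polynomial.C c * (1 - Polynomial.X))
    (a : K) (ha : a ≠ 0)
    (hval : F.map (Polynomial.evalRingHom (1 : K)) = Polynomial.C a) :
    Irreducible F ∧
      ∀ (L : Type*) [Field L] [Algebra K L],
        Irreducible (F.map (Polynomial.mapRingHom (algebraMap K L))) := by
  refine ⟨key_irred g hg F c hc hdeg hlead a ha hval, ?_⟩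
  intro L _ _
  set i := algebraMap K L with hi
  have hinj : Function.Injective i := (algebraMap K L).injective
  have hminj : Function.Injective (Polynomial.mapRingHom i) := fun x y h =>
    Polynomial.map_injective i hinj (by simpa using h)
  have hΦinj : Function.Injective (Polynomial.map (Polynomial.mapRingHom i)) :=
    Polynomial.map_injective _ hminj
  set F' := F.map (Polynomial.mapRingHom i) with hF'
  have hF'0 : F' ≠ 0 := by
    intro h
    apply (fun hF0 : F = 0 => by rw [hF0, natDegree_zero] at hdeg; omega)
    exact hΦinj (by simpa [hF'] using h)
  -- leading coefficient of F'
  have hleadF : Polynomial.mapRingHom i F.leadingCoeff ≠ 0 := by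
    intro h
    have : F.leadingCoeff = 0 := hminj (by simpa using h)
    rw [hlead] at this
    have := congrArg (Polynomial.eval (0 : K)) this
    simp at this
    exact hc this
  have hdeg' : F'.natDegree = g := by
    rw [hF', natDegree_map_of_leadingCoeff_ne_zero _ hleadF, hdeg]
  have hlead' : F'.leadingCoeff = Polynomial.C (i c) * (1 - Polynomial.X) := by
    rw [hF', leadingCoeff_map_of_leadingCoeff_ne_zero _ hleadF, hlead]
    simp [Polynomial.map_one]
  -- evaluation at T = 1 commutes with base change
  have hcomm : (Polynomial.evalRingHom (1 : L)).comp (Polynomial.mapRingHom i)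
      = i.comp (Polynomial.evalRingHom (1 : K)) := by
    apply Polynomial.ringHom_ext <;> simp
  have hval' : F'.map (Polynomial.evalRingHom (1 : L)) = Polynomial.C (i a) := by
    rw [hF', Polynomial.map_map, hcomm, ← Polynomial.map_map, hval]
    simp
  exact key_irred g hg F' (i c) (fun h => hc (hinj (by simpa using h))) hdeg' hlead'
    (i a) (fun h => ha (hinj (by simpa using h))) hval'
end

section
/- Let S be a set and φ : S → S a bijection such that for every integer ν ≥ 1 the fixed-point set Fix(φ^ν) = { x ∈ S : φ^ν(x) = x } is finite. For each n ≥ 0, the number a_n of multisets m of elements of S of cardinality n that are invariant under φ (i.e. the multiset obtained by applying φ to each element of m equals m) is finite, and the following identity of formal power series over ℚ holds: Σ_{n ≥ 0} a_n T^n = exp( Σ_{ν ≥ 1} |Fix(φ^ν)| · T^ν / ν ). -/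
/- STATEMENT 6:
Let `S` be a set and `φ : S → S` a bijection such that for every `ν ≥ 1` the fixed-point set
`Fix(φ^ν)` is finite.  Then for each `n ≥ 0` the number `a_n` of `φ`-invariant multisets of
elements of `S` of cardinality `n` is finite, and, as formal power series over `ℚ`,
  `Σ_{n ≥ 0} a_n T^n = exp( Σ_{ν ≥ 1} |Fix(φ^ν)| T^ν / ν )`.
The exponential `exp(h)` of a power series `h` with zero constant term is
`Σ_{k ≥ 0} h^k / k!`; its `n`-th coefficient is the (finite) sum
`Σ_{k=0}^{n} (coeff n of h^k)/k!`, which is how we define it below. -/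

open PowerSeries

/-- The exponential `Σ_{k ≥ 0} h^k / k!` of a formal power series `h` (intended for `h` with
zero constant term, in which case only `k ≤ n` contributes to the `n`-th coefficient). -/
noncomputable def PowerSeries.expOf (h : PowerSeries ℚ) : PowerSeries ℚ :=
  PowerSeries.mk fun n =>
    ∑ k ∈ Finset.range (n + 1), (PowerSeries.coeff n (h ^ k)) / (Nat.factorial k)

namespace ZetaAux

open Multiset Function

section Orb

variable {S : Type*} [DecidableEq S]

/-- The orbit of `x` under `φ`, as a multiset, of size `minimalPeriod φ x`. -/
noncomputable def orb (φ : S → S) (x : S) : Multiset S :=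
  (Multiset.range (Function.minimalPeriod φ x)).map (fun k => φ^[k] x)

lemma card_orb (φ : S → S) (x : S) :
    Multiset.card (orb φ x) = Function.minimalPeriod φ x := by
  simp [orb]

lemma mem_orb {φ : S → S} {x y : S} :
    y ∈ orb φ x ↔ ∃ k, k < Function.minimalPeriod φ x ∧ φ^[k] x = y := by
  simp [orb, Multiset.mem_map, Multiset.mem_range]

lemma nodup_orb (φ : S → S) (x : S) : (orb φ x).Nodup := by
  refine Multiset.Nodup.map_on ?_ (Multiset.nodup_range _)
  intro a ha b hb hab
  exact Function.iterate_injOn_Iio_minimalPeriod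
    (Set.mem_Iio.mpr (Multiset.mem_range.mp ha))
    (Set.mem_Iio.mpr (Multiset.mem_range.mp hb)) hab

lemma x_mem_orb {φ : S → S} {x : S} (h : 0 < Function.minimalPeriod φ x) :
    x ∈ orb φ x :=
  mem_orb.mpr ⟨0, h, rfl⟩

lemma count_orb_of_mem {φ : S → S} {x y : S} (h : y ∈ orb φ x) :
    (orb φ x).count y = 1 :=
  Multiset.count_eq_one_of_mem (nodup_orb φ x) h

lemma map_orb {φ : S → S} (hφ : Function.Injective φ) (x : S) :
    Multiset.map φ (orb φ x) = orb φ x := by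
  set d := Function.minimalPeriod φ x with hd
  rcases Nat.eq_zero_or_pos d with h0 | hpos
  · simp [orb, ← hd, h0]
  · have hper : φ^[d] x = x := Function.isPeriodicPt_minimalPeriod φ x
    refine (Multiset.Nodup.ext ((nodup_orb φ x).map hφ) (nodup_orb φ x)).mpr ?_
    intro y
    simp only [Multiset.mem_map, mem_orb, ← hd]
    constructor
    · rintro ⟨z, ⟨k, hk, rfl⟩, rfl⟩
      rcases Nat.lt_or_ge (k + 1) d with hk1 | hk1
      · exact ⟨k + 1, hk1, Function.iterate_succ_apply' φ k x⟩
      · have hkd : k + 1 = d := le_antisymm hk hk1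
        refine ⟨0, hpos, ?_⟩
        have hstep : φ (φ^[k] x) = φ^[d] x := by
          rw [← Function.iterate_succ_apply' φ k x]
          congr 1
        rw [Function.iterate_zero_apply, hstep, hper]
    · rintro ⟨k, hk, rfl⟩
      rcases Nat.eq_zero_or_pos k with rfl | hkpos
      · refine ⟨φ^[d - 1] x, ⟨d - 1, by omega, rfl⟩, ?_⟩
        have hstep : φ (φ^[d - 1] x) = φ^[d] x := by
          rw [← Function.iterate_succ_apply' φ (d - 1) x]
          congr 1
          omega
        rw [hstep, hper, Function.iterate_zero_apply]
      · refine ⟨φ^[k - 1] x, ⟨k - 1, by omega, rfl⟩, ?_⟩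
        rw [← Function.iterate_succ_apply' φ (k - 1) x]
        congr 1
        omega

variable {φ : S → S}

lemma count_iterate (hφ : Function.Injective φ) {m : Multiset S}
    (hm : Multiset.map φ m = m) (x : S) (k : ℕ) :
    m.count (φ^[k] x) = m.count x := by
  induction k with
  | zero => rfl
  | succ k ih =>
    rw [Function.iterate_succ_apply']
    calc m.count (φ (φ^[k] x)) = (Multiset.map φ m).count (φ (φ^[k] x)) := by rw [hm]
    _ = m.count (φ^[k] x) := Multiset.count_map_eq_count' φ m hφ _
    _ = m.count x := ih

lemma count_of_mem_orb (hφ : Function.Injective φ) {m : Multiset S}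
    (hm : Multiset.map φ m = m) {x y : S} (hy : y ∈ orb φ x) :
    m.count y = m.count x := by
  obtain ⟨k, _, rfl⟩ := mem_orb.mp hy
  exact count_iterate hφ hm x k

lemma period_pos_of_mem (hφ : Function.Injective φ) {m : Multiset S}
    (hm : Multiset.map φ m = m) {x : S} (hx : x ∈ m) :
    0 < Function.minimalPeriod φ x := by
  have hall : ∀ k : ℕ, φ^[k] x ∈ m := fun k => by
    rw [← Multiset.count_pos, count_iterate hφ hm]
    rwa [Multiset.count_pos]
  have key : ∀ a b : ℕ, a < b → φ^[a] x = φ^[b] x → 0 < Function.minimalPeriod φ x := by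
    intro a b hab h
    have h2 : φ^[a] (φ^[b - a] x) = φ^[a] x := by
      rw [← Function.iterate_add_apply]
      rw [h]
      congr 1
      omega
    have h3 : φ^[b - a] x = x := (hφ.iterate a) h2
    have hper : Function.IsPeriodicPt φ (b - a) x := h3
    exact hper.minimalPeriod_pos (by omega)
  obtain ⟨a, b, hab, h⟩ := Finite.exists_ne_map_eq_of_infinite
    (fun k : ℕ => (⟨φ^[k] x, Multiset.mem_toFinset.mpr (hall k)⟩ : m.toFinset))
  have h' : φ^[a] x = φ^[b] x := congrArg Subtype.val h
  rcases lt_or_gt_of_ne hab with hlt | hgt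
  · exact key a b hlt h'
  · exact key b a hgt h'.symm

lemma smul_orb_le (hφ : Function.Injective φ) {m : Multiset S}
    (hm : Multiset.map φ m = m) {x : S} {j : ℕ} (hj : j ≤ m.count x) :
    j • orb φ x ≤ m := by
  rw [Multiset.le_iff_count]
  intro y
  rw [Multiset.count_nsmul]
  by_cases hy : y ∈ orb φ x
  · rw [count_orb_of_mem hy, mul_one, count_of_mem_orb hφ hm hy]
    exact hj
  · simp [Multiset.count_eq_zero_of_notMem hy]

lemma map_sub_orb (hφ : Function.Injective φ) {m : Multiset S}
    (hm : Multiset.map φ m = m) {x : S} {k : ℕ} (hle : k • orb φ x ≤ m) :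
    Multiset.map φ (m - k • orb φ x) = m - k • orb φ x := by
  have h1 : (m - k • orb φ x) + k • orb φ x = m := tsub_add_cancel_of_le hle
  have h2 : Multiset.map φ (m - k • orb φ x) + k • orb φ x = m := by
    calc Multiset.map φ (m - k • orb φ x) + k • orb φ x
        = Multiset.map φ (m - k • orb φ x) + k • Multiset.map φ (orb φ x) := by
          rw [map_orb hφ]
      _ = Multiset.map φ ((m - k • orb φ x) + k • orb φ x) := by
          rw [Multiset.map_add, Multiset.map_nsmul]
      _ = m := by rw [h1, hm]
  exact add_right_cancel (h2.trans h1.symm)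

end Orb

section Finiteness

variable {S : Type*}

lemma finite_Mn (φ : S → S) (hφ : Function.Injective φ)
    (hfix : ∀ ν : ℕ, 1 ≤ ν → (Function.fixedPoints (φ^[ν])).Finite) (n : ℕ) :
    {m : Multiset S | Multiset.card m = n ∧ Multiset.map φ m = m}.Finite := by
  classical
  have hF : (Function.fixedPoints (φ^[n.factorial])).Finite :=
    hfix n.factorial n.factorial_pos
  haveI : Finite ↥(Function.fixedPoints (φ^[n.factorial])) := hF.to_subtype
  -- every element of an invariant multiset of card `n` lies in `Fix(φ^[n!])`
  have hsupp : ∀ m : Multiset S, Multiset.card m = n → Multiset.map φ m = m →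
      ∀ x ∈ m, x ∈ Function.fixedPoints (φ^[n.factorial]) := by
    intro m hc hm x hx
    have hdpos : 0 < Function.minimalPeriod φ x := period_pos_of_mem hφ hm hx
    have hle : (1 : ℕ) • orb φ x ≤ m :=
      smul_orb_le hφ hm (Multiset.count_pos.mpr hx)
    have hcard : Function.minimalPeriod φ x ≤ n := by
      have := Multiset.card_le_card hle
      rwa [Multiset.card_nsmul, one_mul, card_orb, hc] at this
    have hdvd : Function.minimalPeriod φ x ∣ n.factorial :=
      Nat.dvd_factorial hdpos hcard
    have hper : Function.IsPeriodicPt φ n.factorial x :=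
      Function.isPeriodicPt_iff_minimalPeriod_dvd.mpr hdvd
    exact hper.isFixedPt
  -- the set is contained in the range of a map from a finite type
  set F := Function.fixedPoints (φ^[n.factorial]) with hFdef
  have : {m : Multiset S | Multiset.card m = n ∧ Multiset.map φ m = m} ⊆
      Set.range (fun s : Sym ↥F n => Multiset.map Subtype.val s.1) := by
    rintro m ⟨hc, hm⟩
    refine ⟨⟨m.attach.map (fun y => (⟨y.1, hsupp m hc hm y.1 y.2⟩ : ↥F)), ?_⟩, ?_⟩
    · simp [hc]
    · simp only [Multiset.map_map, Function.comp_def]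
      rw [Multiset.attach_map_val]
  exact (Set.finite_range _).subset this

end Finiteness

section Counting

variable {S : Type*} [DecidableEq S]

lemma nat_card_sigma {ι : Type*} [Fintype ι] (f : ι → Type*) [∀ i, Finite (f i)] :
    Nat.card ((i : ι) × f i) = ∑ i, Nat.card (f i) := by
  letI : ∀ i, Fintype (f i) := fun i => Fintype.ofFinite (f i)
  rw [Nat.card_eq_fintype_card, Fintype.card_sigma]
  exact Finset.sum_congr rfl fun i _ => (Nat.card_eq_fintype_card).symm

lemma keyNat (φ : S → S) (hφ : Function.Injective φ)
    (hfin : ∀ k : ℕ, {m : Multiset S | Multiset.card m = k ∧ Multiset.map φ m = m}.Finite)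
    (hfix : ∀ ν : ℕ, 1 ≤ ν → (Function.fixedPoints (φ^[ν])).Finite)
    (n : ℕ) (hn : 1 ≤ n) :
    n * Nat.card {m : Multiset S // Multiset.card m = n ∧ Multiset.map φ m = m} =
      ∑ ν ∈ Finset.Icc 1 n, Nat.card ↥(Function.fixedPoints (φ^[ν])) *
        Nat.card {m : Multiset S // Multiset.card m = n - ν ∧ Multiset.map φ m = m} := by
  classical
  -- the two sides count the same structure
  set A := {p : ℕ × S × Multiset S //
    (1 ≤ p.1 ∧ p.1 ≤ n) ∧ φ^[p.1] p.2.1 = p.2.1 ∧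
      Multiset.card p.2.2 = n - p.1 ∧ Multiset.map φ p.2.2 = p.2.2} with hA
  set B := {q : Multiset S × S × ℕ //
    (Multiset.card q.1 = n ∧ Multiset.map φ q.1 = q.1) ∧ q.2.2 < q.1.count q.2.1} with hB
  -- the bijection A ≃ B
  have eAB : A ≃ B := by
    refine
      { toFun := fun a =>
          ⟨(a.1.2.2 + (a.1.1 / Function.minimalPeriod φ a.1.2.1) • orb φ a.1.2.1,
            a.1.2.1, a.1.1 / Function.minimalPeriod φ a.1.2.1 - 1), ?_⟩
        invFun := fun b =>
          ⟨((b.1.2.2 + 1) * Function.minimalPeriod φ b.1.2.1, b.1.2.1,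
            b.1.1 - (b.1.2.2 + 1) • orb φ b.1.2.1), ?_⟩
        left_inv := ?_
        right_inv := ?_ }
    · -- forward map lands in B
      obtain ⟨⟨ν, x, m'⟩, ⟨hν1, hνn⟩, hx, hc, hi⟩ := a
      dsimp only
      set d := Function.minimalPeriod φ x with hd
      have hper : Function.IsPeriodicPt φ ν x := hx
      have hdpos : 0 < d := hper.minimalPeriod_pos hν1
      have hdvd : d ∣ ν := hper.minimalPeriod_dvd
      have hjd : ν / d * d = ν := Nat.div_mul_cancel hdvd
      have hj1 : 1 ≤ ν / d := by
        have := Nat.le_of_dvd (by omega) hdvd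
        exact Nat.one_le_div_iff hdpos |>.mpr this
      refine ⟨⟨?_, ?_⟩, ?_⟩
      · rw [Multiset.card_add, Multiset.card_nsmul, card_orb, ← hd, hc, hjd]
        omega
      · rw [Multiset.map_add, Multiset.map_nsmul, map_orb hφ, hi]
      · rw [Multiset.count_add, Multiset.count_nsmul, count_orb_of_mem (x_mem_orb hdpos)]
        omega
    · -- backward map lands in A
      obtain ⟨⟨m, x, i⟩, ⟨hc, hm⟩, hi⟩ := b
      dsimp only
      dsimp only at hc hm hi
      set d := Function.minimalPeriod φ x with hd
      have hx : x ∈ m := by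
        rw [← Multiset.count_pos]
        omega
      have hdpos : 0 < d := period_pos_of_mem hφ hm hx
      have hle : (i + 1) • orb φ x ≤ m := smul_orb_le hφ hm (by omega)
      have hlefull : m.count x • orb φ x ≤ m := smul_orb_le hφ hm le_rfl
      have hcardle : m.count x * d ≤ n := by
        have := Multiset.card_le_card hlefull
        rwa [Multiset.card_nsmul, card_orb, ← hd, hc] at this
      have hνn : (i + 1) * d ≤ n :=
        le_trans (Nat.mul_le_mul_right d (by omega)) hcardle
      refine ⟨⟨?_, hνn⟩, ?_, ?_, ?_⟩
      · have : 0 < (i + 1) * d := Nat.mul_pos (by omega) hdpos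
        omega
      · exact (Function.isPeriodicPt_minimalPeriod φ x).const_mul (i + 1)
      · rw [Multiset.card_sub hle, Multiset.card_nsmul, card_orb, ← hd, hc]
      · exact map_sub_orb hφ hm hle
    · -- left inverse
      rintro ⟨⟨ν, x, m'⟩, ⟨hν1, hνn⟩, hx, hc, hi⟩
      dsimp only at hν1 hνn hx hc hi
      have hper : Function.IsPeriodicPt φ ν x := hx
      have hdpos : 0 < Function.minimalPeriod φ x := hper.minimalPeriod_pos hν1
      have hdvd : Function.minimalPeriod φ x ∣ ν := hper.minimalPeriod_dvd
      have hjd : ν / Function.minimalPeriod φ x * Function.minimalPeriod φ x = ν :=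
        Nat.div_mul_cancel hdvd
      have hj1 : 1 ≤ ν / Function.minimalPeriod φ x := by
        have := Nat.le_of_dvd (by omega) hdvd
        exact Nat.one_le_div_iff hdpos |>.mpr this
      have h1 : ν / Function.minimalPeriod φ x - 1 + 1 = ν / Function.minimalPeriod φ x := by
        omega
      apply Subtype.ext
      dsimp only
      refine Prod.ext ?_ (Prod.ext rfl ?_)
      · dsimp only
        rw [h1, hjd]
      · dsimp only
        rw [h1, add_tsub_cancel_right]
    · -- right inverse
      rintro ⟨⟨m, x, i⟩, ⟨hc, hm⟩, hi⟩
      dsimp only at hc hm hi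
      have hx : x ∈ m := by
        rw [← Multiset.count_pos]
        omega
      have hdpos : 0 < Function.minimalPeriod φ x := period_pos_of_mem hφ hm hx
      have hle : (i + 1) • orb φ x ≤ m := smul_orb_le hφ hm (by omega)
      have hdiv : (i + 1) * Function.minimalPeriod φ x / Function.minimalPeriod φ x = i + 1 :=
        Nat.mul_div_cancel (i + 1) hdpos
      apply Subtype.ext
      dsimp only
      refine Prod.ext ?_ (Prod.ext rfl ?_)
      · dsimp only
        rw [hdiv]
        exact tsub_add_cancel_of_le hle
      · dsimp only
        rw [hdiv]
        omega
    -- now count both sides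
  have cardAB : Nat.card A = Nat.card B := Nat.card_congr eAB
  -- A decomposes as a sigma type over ν ∈ Icc 1 n
  have eA : A ≃ (ν : (Finset.Icc 1 n : Finset ℕ)) ×
      (↥(Function.fixedPoints (φ^[(ν : ℕ)])) ×
        {m : Multiset S // Multiset.card m = n - (ν : ℕ) ∧ Multiset.map φ m = m}) :=
    { toFun := fun a =>
        ⟨⟨a.1.1, Finset.mem_Icc.mpr ⟨a.2.1.1, a.2.1.2⟩⟩,
          ⟨a.1.2.1, a.2.2.1⟩, ⟨a.1.2.2, a.2.2.2.1, a.2.2.2.2⟩⟩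
      invFun := fun s =>
        ⟨(s.1.1, s.2.1.1, s.2.2.1),
          ⟨(Finset.mem_Icc.mp s.1.2).1, (Finset.mem_Icc.mp s.1.2).2⟩,
          s.2.1.2, s.2.2.2⟩
      left_inv := fun a => rfl
      right_inv := fun s => rfl }
  -- B decomposes as a sigma type over invariant multisets
  have eB : B ≃ (m : {m : Multiset S // Multiset.card m = n ∧ Multiset.map φ m = m}) ×
      ((x : (m.1.toFinset : Finset S)) × Fin (m.1.count (x : S))) :=
    { toFun := fun b =>
        ⟨⟨b.1.1, b.2.1⟩,
          ⟨b.1.2.1, Multiset.mem_toFinset.mpr (Multiset.count_pos.mp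
            (lt_of_le_of_lt (Nat.zero_le _) b.2.2))⟩,
          ⟨b.1.2.2, b.2.2⟩⟩
      invFun := fun s =>
        ⟨(s.1.1, s.2.1.1, s.2.2.1), ⟨s.1.2.1, s.1.2.2⟩, s.2.2.2⟩
      left_inv := fun b => rfl
      right_inv := fun s => rfl }
  -- compute the cardinality of A
  haveI hfinfix : ∀ (ν : (Finset.Icc 1 n : Finset ℕ)),
      Finite ↥(Function.fixedPoints (φ^[(ν : ℕ)])) := fun ν =>
    (hfix ν.1 (Finset.mem_Icc.mp ν.2).1).to_subtype
  haveI hfinM : ∀ k : ℕ,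
      Finite {m : Multiset S // Multiset.card m = k ∧ Multiset.map φ m = m} := fun k =>
    (hfin k).to_subtype
  have cardA : Nat.card A = ∑ ν ∈ Finset.Icc 1 n,
      Nat.card ↥(Function.fixedPoints (φ^[ν])) *
        Nat.card {m : Multiset S // Multiset.card m = n - ν ∧ Multiset.map φ m = m} := by
    rw [Nat.card_congr eA, nat_card_sigma]
    rw [← Finset.sum_coe_sort (Finset.Icc 1 n) (fun ν =>
      Nat.card ↥(Function.fixedPoints (φ^[ν])) *
        Nat.card {m : Multiset S // Multiset.card m = n - ν ∧ Multiset.map φ m = m})]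
    exact Finset.sum_congr rfl fun ν _ => Nat.card_prod _ _
  -- compute the cardinality of B
  haveI : Fintype {m : Multiset S // Multiset.card m = n ∧ Multiset.map φ m = m} :=
    Fintype.ofFinite _
  have cardB : Nat.card B =
      Nat.card {m : Multiset S // Multiset.card m = n ∧ Multiset.map φ m = m} * n := by
    rw [Nat.card_congr eB, nat_card_sigma]
    have inner : ∀ m : {m : Multiset S // Multiset.card m = n ∧ Multiset.map φ m = m},
        Nat.card ((x : (m.1.toFinset : Finset S)) × Fin (m.1.count (x : S))) = n := by
      intro m
      rw [nat_card_sigma]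
      have : ∀ x : (m.1.toFinset : Finset S),
          Nat.card (Fin (m.1.count (x : S))) = m.1.count (x : S) := fun x => by
        simp [Nat.card_eq_fintype_card]
      rw [Finset.sum_congr rfl fun x _ => this x]
      rw [Finset.sum_coe_sort m.1.toFinset (fun x => m.1.count x)]
      rw [Multiset.toFinset_sum_count_eq]
      exact m.2.1
    rw [Finset.sum_congr rfl fun m _ => inner m]
    rw [Finset.sum_const, Finset.card_univ, smul_eq_mul, Nat.card_eq_fintype_card]
  rw [mul_comm, ← cardB, ← cardAB, cardA]

end Counting

section PowerSeriesLemmas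

lemma coeff_pow_eq_zero {h : PowerSeries ℚ} (h0 : PowerSeries.constantCoeff h = 0)
    {n k : ℕ} (hnk : n < k) : PowerSeries.coeff n (h ^ k) = 0 := by
  have hdvd : (PowerSeries.X : PowerSeries ℚ) ^ k ∣ h ^ k :=
    pow_dvd_pow_of_dvd (PowerSeries.X_dvd_iff.mpr h0) k
  exact PowerSeries.X_pow_dvd_iff.mp hdvd n hnk

lemma derivative_expOf {h : PowerSeries ℚ} (h0 : PowerSeries.constantCoeff h = 0) :
    d⁄dX ℚ (PowerSeries.expOf h) = (d⁄dX ℚ h) * PowerSeries.expOf h := by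
  ext n
  rw [PowerSeries.coeff_derivative]
  -- LHS : coeff (n+1) (expOf h) * (n+1)
  have hDpow : ∀ k : ℕ, PowerSeries.coeff (n + 1) (h ^ k) * (n + 1 : ℚ) =
      (k : ℚ) * PowerSeries.coeff n (h ^ (k - 1) * d⁄dX ℚ h) := by
    intro k
    have h1 : PowerSeries.coeff (n + 1) (h ^ k) * (n + 1 : ℚ) =
        PowerSeries.coeff n (d⁄dX ℚ (h ^ k)) := (PowerSeries.coeff_derivative _ _).symm
    rw [h1, Derivation.leibniz_pow, smul_eq_mul, _root_.map_nsmul, nsmul_eq_mul]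
  have hLHS : PowerSeries.coeff (n + 1) (PowerSeries.expOf h) * (n + 1 : ℚ) =
      ∑ j ∈ Finset.range (n + 1), PowerSeries.coeff n (h ^ j * d⁄dX ℚ h) / (Nat.factorial j) := by
    rw [PowerSeries.expOf, PowerSeries.coeff_mk, Finset.sum_mul]
    have step : ∀ k ∈ Finset.range (n + 2),
        PowerSeries.coeff (n + 1) (h ^ k) / (Nat.factorial k) * (n + 1 : ℚ) =
          (k : ℚ) * PowerSeries.coeff n (h ^ (k - 1) * d⁄dX ℚ h) / (Nat.factorial k) := by
      intro k _
      rw [div_mul_eq_mul_div, hDpow k]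
    rw [Finset.sum_congr rfl step]
    rw [Finset.sum_range_succ']
    simp only [Nat.cast_zero, zero_mul, zero_div, add_zero]
    refine Finset.sum_congr rfl fun j _ => ?_
    have hfact : ((j + 1).factorial : ℚ) = (j + 1 : ℚ) * (j.factorial : ℚ) := by
      rw [Nat.factorial_succ]
      push_cast
      ring
    have hne : (j + 1 : ℚ) ≠ 0 := by positivity
    have hfne : ((j.factorial : ℚ)) ≠ 0 := Nat.cast_ne_zero.mpr j.factorial_ne_zero
    rw [Nat.add_sub_cancel]
    push_cast [hfact]
    field_simp
  rw [hLHS]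
  -- RHS
  rw [PowerSeries.coeff_mul]
  have expand : ∀ p ∈ Finset.HasAntidiagonal.antidiagonal n,
      PowerSeries.coeff p.1 (d⁄dX ℚ h) * PowerSeries.coeff p.2 (PowerSeries.expOf h) =
        ∑ j ∈ Finset.range (n + 1), PowerSeries.coeff p.1 (d⁄dX ℚ h) *
          (PowerSeries.coeff p.2 (h ^ j) / (Nat.factorial j)) := by
    intro p hp
    have hp2 : p.1 + p.2 = n := Finset.HasAntidiagonal.mem_antidiagonal.mp hp
    rw [PowerSeries.expOf, PowerSeries.coeff_mk, Finset.mul_sum]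
    refine Finset.sum_subset (Finset.range_subset_range.mpr (by omega)) ?_
    intro k _ hk
    have : p.2 < k := by
      simp only [Finset.mem_range] at hk
      omega
    rw [coeff_pow_eq_zero h0 this, zero_div, mul_zero]
  rw [Finset.sum_congr rfl expand, Finset.sum_comm]
  refine Finset.sum_congr rfl fun j _ => ?_
  rw [mul_comm (h ^ j) (d⁄dX ℚ h), PowerSeries.coeff_mul, Finset.sum_div]
  refine Finset.sum_congr rfl fun p _ => ?_
  rw [mul_div_assoc]

lemma expOf_rec {h : PowerSeries ℚ} (h0 : PowerSeries.constantCoeff h = 0) (m : ℕ) :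
    (m + 1 : ℚ) * PowerSeries.coeff (m + 1) (PowerSeries.expOf h) =
      ∑ k ∈ Finset.range (m + 1), ((k + 1 : ℚ) * PowerSeries.coeff (k + 1) h) *
        PowerSeries.coeff (m - k) (PowerSeries.expOf h) := by
  have hder := congrArg (PowerSeries.coeff m) (derivative_expOf h0)
  rw [PowerSeries.coeff_derivative, PowerSeries.coeff_mul] at hder
  rw [Finset.Nat.sum_antidiagonal_eq_sum_range_succ_mk] at hder
  rw [mul_comm]
  rw [hder]
  refine Finset.sum_congr rfl fun k _ => ?_
  rw [PowerSeries.coeff_derivative]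
  ring

lemma rec_unique (C : ℕ → ℚ) (u v : ℕ → ℚ) (h0 : u 0 = v 0)
    (hu : ∀ m : ℕ, (m + 1 : ℚ) * u (m + 1) = ∑ k ∈ Finset.range (m + 1), C k * u (m - k))
    (hv : ∀ m : ℕ, (m + 1 : ℚ) * v (m + 1) = ∑ k ∈ Finset.range (m + 1), C k * v (m - k)) :
    ∀ n, u n = v n := by
  intro n
  induction n using Nat.strong_induction_on with
  | _ n ih =>
    match n with
    | 0 => exact h0
    | m + 1 =>
      have hsum : ∑ k ∈ Finset.range (m + 1), C k * u (m - k) =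
          ∑ k ∈ Finset.range (m + 1), C k * v (m - k) :=
        Finset.sum_congr rfl fun k _ => by rw [ih (m - k) (by omega)]
      have heq : (m + 1 : ℚ) * u (m + 1) = (m + 1 : ℚ) * v (m + 1) := by
        rw [hu m, hv m, hsum]
      exact mul_left_cancel₀ (by positivity) heq

end PowerSeriesLemmas

end ZetaAux

theorem multiset_zeta_function_eq_exp
    {S : Type*} (φ : S → S) (hφ : Function.Bijective φ)
    (hfix : ∀ ν : ℕ, 1 ≤ ν → (Function.fixedPoints (φ^[ν])).Finite) :
    (∀ n : ℕ, {m : Multiset S | Multiset.card m = n ∧ Multiset.map φ m = m}.Finite) ∧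
      PowerSeries.mk
          (fun n => (Nat.card {m : Multiset S // Multiset.card m = n ∧ Multiset.map φ m = m} :
            ℚ)) =
        PowerSeries.expOf
          (PowerSeries.mk fun ν =>
            if ν = 0 then 0
            else (Nat.card (Function.fixedPoints (φ^[ν])) : ℚ) / ν) := by
  classical
  have hinj := hφ.injective
  have hfin := ZetaAux.finite_Mn φ hinj hfix
  refine ⟨hfin, ?_⟩
  set h : PowerSeries ℚ := PowerSeries.mk fun ν =>
    if ν = 0 then 0 else (Nat.card (Function.fixedPoints (φ^[ν])) : ℚ) / ν with hh
  have h0 : PowerSeries.constantCoeff h = 0 := by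
    rw [hh, ← PowerSeries.coeff_zero_eq_constantCoeff, PowerSeries.coeff_mk]
    simp
  set u : ℕ → ℚ := fun n =>
    (Nat.card {m : Multiset S // Multiset.card m = n ∧ Multiset.map φ m = m} : ℚ) with hu
  set v : ℕ → ℚ := fun n => PowerSeries.coeff n (PowerSeries.expOf h) with hv
  set C : ℕ → ℚ := fun k => (k + 1 : ℚ) * PowerSeries.coeff (k + 1) h with hC
  -- C k equals the number of fixed points of φ^[k+1]
  have hCval : ∀ k : ℕ, C k = (Nat.card (Function.fixedPoints (φ^[k + 1])) : ℚ) := by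
    intro k
    have hne : ((k : ℚ) + 1) ≠ 0 := by positivity
    simp only [hC, hh, PowerSeries.coeff_mk]
    rw [if_neg (by omega : ¬(k + 1 = 0))]
    push_cast
    rw [mul_comm, div_mul_cancel₀ _ hne]
  -- base case
  have hbase : u 0 = v 0 := by
    have hu0 : u 0 = 1 := by
      simp only [hu]
      have : Nat.card {m : Multiset S // Multiset.card m = 0 ∧ Multiset.map φ m = m} = 1 := by
        haveI : Unique {m : Multiset S // Multiset.card m = 0 ∧ Multiset.map φ m = m} :=
          { default := ⟨0, by simp⟩
            uniq := fun m => by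
              apply Subtype.ext
              have := m.2.1
              rw [Multiset.card_eq_zero] at this
              simp [this] }
        exact Nat.card_unique
      rw [this]
      norm_num
    have hv0 : v 0 = 1 := by
      simp only [hv]
      rw [PowerSeries.expOf, PowerSeries.coeff_mk]
      simp
    rw [hu0, hv0]
  -- recursion for u
  have hurec : ∀ m : ℕ, (m + 1 : ℚ) * u (m + 1) = ∑ k ∈ Finset.range (m + 1), C k * u (m - k) := by
    intro m
    have key := ZetaAux.keyNat φ hinj hfin hfix (m + 1) (by omega)
    have keyQ : ((m + 1 : ℕ) : ℚ) *
        (Nat.card {m' : Multiset S // Multiset.card m' = m + 1 ∧ Multiset.map φ m' = m'} : ℚ) =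
        ∑ ν ∈ Finset.Icc 1 (m + 1), (Nat.card ↥(Function.fixedPoints (φ^[ν])) : ℚ) *
          (Nat.card {m' : Multiset S //
            Multiset.card m' = m + 1 - ν ∧ Multiset.map φ m' = m'} : ℚ) := by
      exact_mod_cast congrArg (Nat.cast : ℕ → ℚ) key
    simp only [hu]
    push_cast at keyQ ⊢
    rw [keyQ]
    rw [← Finset.Ico_add_one_right_eq_Icc, Finset.sum_Ico_eq_sum_range]
    refine Finset.sum_congr (by rw [Nat.add_sub_cancel]) fun k _ => ?_
    rw [hCval k]
    have h2 : m + 1 - (1 + k) = m - k := by omega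
    have h2' : m + 1 - (k + 1) = m - k := by omega
    have h3 : 1 + k = k + 1 := by omega
    simp only [h2, h2', h3]
  -- recursion for v
  have hvrec : ∀ m : ℕ, (m + 1 : ℚ) * v (m + 1) = ∑ k ∈ Finset.range (m + 1), C k * v (m - k) :=
    fun m => ZetaAux.expOf_rec h0 m
  have := ZetaAux.rec_unique C u v hbase hurec hvrec
  ext n
  rw [PowerSeries.coeff_mk]
  exact this n
end
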